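/- arXiv:0802.1293 — 2 statements merged into one kernel-verified Lean document; each statement's English description precedes it below -/
import Mathlib

section
/- Let A_1, A_2, … be a quasifibonacci sequence of level N and let n be a positive integer with S_n nonempty. Then there is exactly one element a ∈ S_n that contains no N consecutive 1's (i.e., no index j ≥ 1 with a_j = a_{j+1} = ⋯ = a_{j+N−1} = 1); this element is the unique maximal element of the poset P_n; moreover, if A_k ≤ n < A_{k+1}, then this element has length l(a) = k. -/
/-- `A` (with meaningful values at indices `≥ 1`) is a quasifibonacci sequence of level `N`:
the terms are positive, `A (k+N) = A (k+N-1) + ⋯ + A k` for all `k ≥ 1`, and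
`A k > A (k-1) + ⋯ + A 1` for all `1 ≤ k ≤ N`. -/
def QuasiFib (N : ℕ) (A : ℕ → ℕ) : Prop :=
  (∀ i, 1 ≤ i → 0 < A i) ∧
  (∀ k, 1 ≤ k → A (k + N) = ∑ i ∈ Finset.Icc k (k + N - 1), A i) ∧
  (∀ k, 1 ≤ k → k ≤ N → (∑ i ∈ Finset.Icc 1 (k - 1), A i) < A k)

/-- `SRep A n` is the set of partitions of `n` into distinct terms of `A`, encoded as the
finite sets `F` of positive indices with `∑_{i ∈ F} A i = n` (i.e. the 0-1 indicator
sequences of the paper). -/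
def SRep (A : ℕ → ℕ) (n : ℕ) : Set (Finset ℕ) :=
  {F | (∀ i ∈ F, 1 ≤ i) ∧ (∑ i ∈ F, A i) = n}

/-- the length `l(a)`: the largest index `i` with `a_i = 1` (and `0` for the empty set). -/
def len (F : Finset ℕ) : ℕ := F.sup id

/-- The directed edge relation of the digraph `G_n`: `(a,b)` is an edge iff there is a `k ≥ 1`
with `a_{k+N} = 1`, `a_k = ⋯ = a_{k+N-1} = 0`, `b_{k+N} = 0`, `b_k = ⋯ = b_{k+N-1} = 1`, and
`a_t = b_t` for all `t ∉ {k, …, k+N}`. -/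
def Edge (N : ℕ) (F G : Finset ℕ) : Prop :=
  ∃ k, 1 ≤ k ∧ (k + N) ∈ F ∧ (∀ i ∈ Finset.Ico k (k + N), i ∉ F) ∧
    (k + N) ∉ G ∧ (∀ i ∈ Finset.Ico k (k + N), i ∈ G) ∧
    (∀ t, t ∉ Finset.Icc k (k + N) → (t ∈ F ↔ t ∈ G))

/-- The partial order of the poset `P_n`: `a ≥ b` iff `b` is reachable from `a` by a
(possibly empty) directed path of edges. -/
def pge (N : ℕ) : Finset ℕ → Finset ℕ → Prop := Relation.ReflTransGen (Edge N)

/-- `A_{k,0} = A_k + Σ_{1 ≤ i < k-N-1, N∤i} A_{k-N-1-i}`. -/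
def Ak0 (N : ℕ) (A : ℕ → ℕ) (k : ℕ) : ℕ :=
  A k + ∑ i ∈ (Finset.Ico 1 (k - N - 1)).filter (fun i => ¬ N ∣ i), A (k - N - 1 - i)

/-- `A_{k,1} = A_k + Σ_{1 ≤ i < k-N, N∤i} A_{k-N-i}`. -/
def Ak1 (N : ℕ) (A : ℕ → ℕ) (k : ℕ) : ℕ :=
  A k + ∑ i ∈ (Finset.Ico 1 (k - N)).filter (fun i => ¬ N ∣ i), A (k - N - i)

/-- `A_{k,2} = A_k + Σ_{1 ≤ i < k-N+1, N∤i} A_{k-N+1-i}`. -/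
def Ak2 (N : ℕ) (A : ℕ → ℕ) (k : ℕ) : ℕ :=
  A k + ∑ i ∈ (Finset.Ico 1 (k - N + 1)).filter (fun i => ¬ N ∣ i), A (k - N + 1 - i)

/-- `a` contains no `N` consecutive `1`'s. -/
def NoConsecOnes (N : ℕ) (F : Finset ℕ) : Prop :=
  ¬ ∃ j, 1 ≤ j ∧ ∀ i ∈ Finset.Ico j (j + N), i ∈ F

section Aux
variable {N : ℕ} {A : ℕ → ℕ}

lemma qf_step (hN : 2 ≤ N) (hA : QuasiFib N A) (k : ℕ) (hk : 1 ≤ k) :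
    A k < A (k + 1) := by
  by_cases h : k + 1 ≤ N
  · have h3 := hA.2.2 (k + 1) (by omega) h
    have h4 : A k ≤ ∑ i ∈ Finset.Icc 1 (k + 1 - 1), A i := by
      apply Finset.single_le_sum (f := A) (fun i _ => Nat.zero_le _)
      simp [Finset.mem_Icc]; omega
    omega
  · have hm : 1 ≤ k + 1 - N := by omega
    have hrec := hA.2.1 (k + 1 - N) hm
    have he : k + 1 - N + N = k + 1 := by omega
    have he2 : k + 1 - N + N - 1 = k := by omega
    rw [he] at hrec
    simp only [Nat.add_sub_cancel] at hrec
    rw [hrec]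
    apply Finset.single_lt_sum (i := k) (j := k + 1 - N)
    · omega
    · simp [Finset.mem_Icc]; omega
    · simp [Finset.mem_Icc]; omega
    · exact hA.1 _ hm
    · exact fun _ _ _ => Nat.zero_le _

lemma qf_mono (hN : 2 ≤ N) (hA : QuasiFib N A) {i j : ℕ} (h1 : 1 ≤ i) (hij : i ≤ j) :
    A i ≤ A j := by
  induction j, hij using Nat.le_induction with
  | base => exact le_refl _
  | succ m hm ih => exact le_trans ih (le_of_lt (qf_step hN hA m (by omega)))

lemma noconsec_subset {F G : Finset ℕ} (h : G ⊆ F) (hF : NoConsecOnes N F) :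
    NoConsecOnes N G := by
  rintro ⟨j, hj, hall⟩
  exact hF ⟨j, hj, fun i hi => h (hall i hi)⟩

lemma sum_lt_next (hN : 2 ≤ N) (hA : QuasiFib N A) :
    ∀ k (F : Finset ℕ), (∀ i ∈ F, 1 ≤ i ∧ i ≤ k) → NoConsecOnes N F →
      ∑ i ∈ F, A i < A (k + 1) := by
  intro k
  induction k using Nat.strong_induction_on with
  | _ k ih =>
    intro F hF hnc
    by_cases hk : k + 1 ≤ N
    · have hsub : F ⊆ Finset.Icc 1 k := fun i hi => Finset.mem_Icc.2 (hF i hi)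
      have h1 : ∑ i ∈ F, A i ≤ ∑ i ∈ Finset.Icc 1 k, A i :=
        Finset.sum_le_sum_of_subset hsub
      have h2 := hA.2.2 (k + 1) (by omega) hk
      simp only [Nat.add_sub_cancel] at h2
      omega
    · have hkN : N ≤ k := by omega
      have hex : ∃ j ∈ Finset.Icc (k - N + 1) k, j ∉ F := by
        by_contra hc
        push_neg at hc
        exact hnc ⟨k - N + 1, by omega, fun i hi => by
          apply hc
          rw [Finset.mem_Ico] at hi
          rw [Finset.mem_Icc]
          omega⟩
      obtain ⟨j, hjmem, hjF⟩ := hex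
      rw [Finset.mem_Icc] at hjmem
      have hj1 : 1 ≤ j := by omega
      have hsplit : ∑ i ∈ F, A i =
          ∑ i ∈ F.filter (· < j), A i + ∑ i ∈ F.filter (fun i => ¬ i < j), A i :=
        (Finset.sum_filter_add_sum_filter_not F _ _).symm
      have h1 : ∑ i ∈ F.filter (· < j), A i < A ((j - 1) + 1) := by
        apply ih (j - 1) (by omega)
        · intro i hi
          rw [Finset.mem_filter] at hi
          exact ⟨(hF i hi.1).1, by omega⟩
        · exact noconsec_subset (Finset.filter_subset _ _) hnc
      have hj1' : (j - 1) + 1 = j := by omega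
      rw [hj1'] at h1
      have h2 : ∑ i ∈ F.filter (fun i => ¬ i < j), A i ≤ ∑ i ∈ Finset.Icc (j + 1) k, A i := by
        apply Finset.sum_le_sum_of_subset
        intro i hi
        rw [Finset.mem_filter] at hi
        have hik := (hF i hi.1).2
        have hne : i ≠ j := fun h => hjF (h ▸ hi.1)
        rw [Finset.mem_Icc]
        omega
      have hIns : Finset.Icc j k = insert j (Finset.Icc (j + 1) k) := by
        ext x
        simp only [Finset.mem_Icc, Finset.mem_insert]
        omega
      have h3 : A j + ∑ i ∈ Finset.Icc (j + 1) k, A i = ∑ i ∈ Finset.Icc j k, A i := by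
        rw [hIns, Finset.sum_insert (by simp [Finset.mem_Icc])]
      have h4 : ∑ i ∈ Finset.Icc j k, A i ≤ ∑ i ∈ Finset.Icc (k - N + 1) k, A i := by
        apply Finset.sum_le_sum_of_subset
        intro x hx
        rw [Finset.mem_Icc] at hx ⊢
        omega
      have hrec := hA.2.1 (k - N + 1) (by omega)
      have he : k - N + 1 + N = k + 1 := by omega
      have he2 : k - N + 1 + N - 1 = k := by omega
      rw [he] at hrec
      simp only [Nat.add_sub_cancel] at hrec
      omega

lemma srep_nonempty {n : ℕ} (hn : 1 ≤ n) {F : Finset ℕ} (hF : F ∈ SRep A n) :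
    F.Nonempty := by
  rcases F.eq_empty_or_nonempty with h | h
  · exfalso; have := hF.2; rw [h] at this; simp at this; omega
  · exact h

lemma max_bracket (hN : 2 ≤ N) (hA : QuasiFib N A) {n : ℕ} {F : Finset ℕ}
    (hF : F ∈ SRep A n) (hnc : NoConsecOnes N F) (hne : F.Nonempty) :
    A (F.max' hne) ≤ n ∧ n < A (F.max' hne + 1) := by
  constructor
  · calc A (F.max' hne) ≤ ∑ i ∈ F, A i :=
        Finset.single_le_sum (fun i _ => Nat.zero_le _) (F.max'_mem hne)
      _ = n := hF.2
  · have := sum_lt_next hN hA (F.max' hne) F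
      (fun i hi => ⟨hF.1 i hi, F.le_max' i hi⟩) hnc
    have hs := hF.2
    omega

lemma bracket_unique (hN : 2 ≤ N) (hA : QuasiFib N A) {n k m : ℕ}
    (hk : 1 ≤ k) (hm : 1 ≤ m) (h1 : A k ≤ n) (h2 : n < A (k + 1))
    (h3 : A m ≤ n) (h4 : n < A (m + 1)) : k = m := by
  by_contra h
  rcases Nat.lt_or_ge k m with hlt | hge
  · have : A (k + 1) ≤ A m := qf_mono hN hA (by omega) (by omega)
    omega
  · have hlt : m < k := by omega
    have : A (m + 1) ≤ A k := qf_mono hN hA (by omega) (by omega)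
    omega

lemma noconsec_unique (hN : 2 ≤ N) (hA : QuasiFib N A) :
    ∀ n (F G : Finset ℕ), F ∈ SRep A n → G ∈ SRep A n →
      NoConsecOnes N F → NoConsecOnes N G → F = G := by
  intro n
  induction n using Nat.strong_induction_on with
  | _ n ih =>
    intro F G hF hG hncF hncG
    rcases Nat.eq_zero_or_pos n with h0 | hpos
    · have eF : F = ∅ := by
        rcases F.eq_empty_or_nonempty with h | h
        · exact h
        · exfalso
          obtain ⟨i, hi⟩ := h
          have hpos : 0 < ∑ i ∈ F, A i :=
            Finset.sum_pos' (fun _ _ => Nat.zero_le _) ⟨i, hi, hA.1 i (hF.1 i hi)⟩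
          have h2 := hF.2
          omega
      have eG : G = ∅ := by
        rcases G.eq_empty_or_nonempty with h | h
        · exact h
        · exfalso
          obtain ⟨i, hi⟩ := h
          have hpos : 0 < ∑ i ∈ G, A i :=
            Finset.sum_pos' (fun _ _ => Nat.zero_le _) ⟨i, hi, hA.1 i (hG.1 i hi)⟩
          have h2 := hG.2
          omega
      rw [eF, eG]
    · have hFne := srep_nonempty hpos hF
      have hGne := srep_nonempty hpos hG
      have hbF := max_bracket hN hA hF hncF hFne
      have hbG := max_bracket hN hA hG hncG hGne
      have hm1 : 1 ≤ F.max' hFne := hF.1 _ (F.max'_mem hFne)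
      have hm2 : 1 ≤ G.max' hGne := hG.1 _ (G.max'_mem hGne)
      have heq : F.max' hFne = G.max' hGne :=
        bracket_unique hN hA hm1 hm2 hbF.1 hbF.2 hbG.1 hbG.2
      set m := F.max' hFne with hmdef
      have hmF : m ∈ F := F.max'_mem hFne
      have hmG : m ∈ G := heq ▸ G.max'_mem hGne
      have hAm : 0 < A m := hA.1 m hm1
      have hsF : ∑ i ∈ F.erase m, A i = n - A m := by
        have := Finset.add_sum_erase F A hmF
        have h2 := hF.2
        omega
      have hsG : ∑ i ∈ G.erase m, A i = n - A m := by
        have := Finset.add_sum_erase G A hmG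
        have h2 := hG.2
        omega
      have hers : F.erase m = G.erase m := by
        apply ih (n - A m) (by omega)
        · exact ⟨fun i hi => hF.1 i (Finset.mem_of_mem_erase hi), hsF⟩
        · exact ⟨fun i hi => hG.1 i (Finset.mem_of_mem_erase hi), hsG⟩
        · exact noconsec_subset (Finset.erase_subset _ _) hncF
        · exact noconsec_subset (Finset.erase_subset _ _) hncG
      have : insert m (F.erase m) = insert m (G.erase m) := by rw [hers]
      rwa [Finset.insert_erase hmF, Finset.insert_erase hmG] at this

lemma raise (hN : 2 ≤ N) (hA : QuasiFib N A) {n : ℕ} {F : Finset ℕ}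
    (hF : F ∈ SRep A n) (h : ¬ NoConsecOnes N F) :
    ∃ c ∈ SRep A n, Edge N c F ∧ c.card < F.card := by
  rw [NoConsecOnes, not_not] at h
  obtain ⟨j0, hj0, hall0⟩ := h
  classical
  set T := (Finset.Icc 1 (F.sup id)).filter
    (fun j => ∀ i ∈ Finset.Ico j (j + N), i ∈ F) with hT
  have hTne : T.Nonempty := by
    refine ⟨j0, ?_⟩
    rw [hT, Finset.mem_filter, Finset.mem_Icc]
    have hj0F : j0 ∈ F := hall0 j0 (by rw [Finset.mem_Ico]; omega)
    exact ⟨⟨hj0, Finset.le_sup (f := id) hj0F⟩, hall0⟩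
  set j := T.max' hTne with hjdef
  have hjT : j ∈ T := T.max'_mem hTne
  rw [hT, Finset.mem_filter, Finset.mem_Icc] at hjT
  have hj1 : 1 ≤ j := hjT.1.1
  have hjall : ∀ i ∈ Finset.Ico j (j + N), i ∈ F := hjT.2
  have hsub : Finset.Ico j (j + N) ⊆ F := fun i hi => hjall i hi
  have hjNF : j + N ∉ F := by
    intro hmem
    have hj1T : j + 1 ∈ T := by
      rw [hT, Finset.mem_filter, Finset.mem_Icc]
      refine ⟨⟨by omega, ?_⟩, ?_⟩
      · have := Finset.le_sup (f := id) hmem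
        simp only [id] at this
        omega
      · intro i hi
        rw [Finset.mem_Ico] at hi
        rcases Nat.lt_or_ge i (j + N) with h' | h'
        · exact hjall i (by rw [Finset.mem_Ico]; omega)
        · have : i = j + N := by omega
          rwa [this]
    have := T.le_max' (j + 1) hj1T
    omega
  set c := insert (j + N) (F \ Finset.Ico j (j + N)) with hc
  have hnotmem : j + N ∉ F \ Finset.Ico j (j + N) := fun h' => hjNF (Finset.mem_sdiff.1 h').1
  have hIcoEq : Finset.Icc j (j + N - 1) = Finset.Ico j (j + N) := by
    ext x
    simp only [Finset.mem_Icc, Finset.mem_Ico]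
    omega
  have hrec := hA.2.1 j hj1
  rw [hIcoEq] at hrec
  have hsum : ∑ i ∈ c, A i = n := by
    rw [hc, Finset.sum_insert hnotmem, hrec]
    have := Finset.sum_sdiff (f := A) hsub
    have h2 := hF.2
    omega
  have hcS : c ∈ SRep A n := by
    refine ⟨?_, hsum⟩
    intro i hi
    rw [hc, Finset.mem_insert] at hi
    rcases hi with h' | h'
    · omega
    · exact hF.1 i (Finset.mem_sdiff.1 h').1
  have hedge : Edge N c F := by
    refine ⟨j, hj1, ?_, ?_, hjNF, hjall, ?_⟩
    · rw [hc]; exact Finset.mem_insert_self _ _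
    · intro i hi
      rw [Finset.mem_Ico] at hi
      rw [hc, Finset.mem_insert, Finset.mem_sdiff, Finset.mem_Ico]
      push_neg
      exact ⟨by omega, fun _ => ⟨hi.1, hi.2⟩⟩
    · intro t ht
      rw [Finset.mem_Icc] at ht
      rw [hc, Finset.mem_insert, Finset.mem_sdiff, Finset.mem_Ico]
      constructor
      · rintro (h' | h')
        · omega
        · exact h'.1
      · intro h'
        right
        exact ⟨h', by omega⟩
  have hcard : c.card < F.card := by
    have h1 : (Finset.Ico j (j + N)).card = N := by
      rw [Nat.card_Ico]; omega
    have h2 : (F \ Finset.Ico j (j + N)).card = F.card - N := by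
      rw [Finset.card_sdiff_of_subset hsub, h1]
    have h3 : N ≤ F.card := h1 ▸ Finset.card_le_card hsub
    have h4 : c.card ≤ (F \ Finset.Ico j (j + N)).card + 1 := by
      rw [hc]; exact Finset.card_insert_le _ _
    omega
  exact ⟨c, hcS, hedge, hcard⟩

lemma exists_noconsec (hN : 2 ≤ N) (hA : QuasiFib N A) :
    ∀ m n (F : Finset ℕ), F.card = m → F ∈ SRep A n →
      ∃ a ∈ SRep A n, NoConsecOnes N a := by
  intro m
  induction m using Nat.strong_induction_on with
  | _ m ih =>
    intro n F hcard hF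
    by_cases hc : NoConsecOnes N F
    · exact ⟨F, hF, hc⟩
    · obtain ⟨c, hcS, _, hlt⟩ := raise hN hA hF hc
      exact ih c.card (by omega) n c rfl hcS

lemma noconsec_no_edge {a c : Finset ℕ} (hnc : NoConsecOnes N a)
    (he : Edge N c a) : False := by
  obtain ⟨k, hk1, _, _, _, hall, _⟩ := he
  exact hnc ⟨k, hk1, hall⟩

end Aux

/-- Proposition 3.1: if `S_n ≠ ∅` then there is exactly one `a ∈ S_n` with no `N`
consecutive `1`'s; it is the unique maximal element `1̂` of `P_n`; and whenever
`A_k ≤ n < A_{k+1}`, it has length `l(a) = k`. -/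
theorem stmt_7 (N : ℕ) (hN : 2 ≤ N) (A : ℕ → ℕ) (hA : QuasiFib N A)
    (n : ℕ) (hn : 1 ≤ n) (hne : (SRep A n).Nonempty) :
    ∃ a ∈ SRep A n, NoConsecOnes N a ∧
      (∀ b ∈ SRep A n, NoConsecOnes N b → b = a) ∧
      (∀ b ∈ SRep A n, pge N b a → b = a) ∧
      (∀ b ∈ SRep A n, (∀ c ∈ SRep A n, pge N c b → c = b) → b = a) ∧
      (∀ k, 1 ≤ k → A k ≤ n → n < A (k + 1) → len a = k) := by
  obtain ⟨F0, hF0⟩ := hne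
  obtain ⟨a, haS, hanc⟩ := exists_noconsec hN hA F0.card n F0 rfl hF0
  have huniq : ∀ b ∈ SRep A n, NoConsecOnes N b → b = a :=
    fun b hb hbnc => noconsec_unique hN hA n b a hb haS hbnc hanc
  have hmax : ∀ b, pge N b a → b = a := by
    intro b hba
    rcases Relation.ReflTransGen.cases_tail hba with h | ⟨x, _, hedge⟩
    · exact h.symm
    · exact absurd hedge (fun h' => noconsec_no_edge hanc h')
  refine ⟨a, haS, hanc, huniq, fun b _ hba => hmax b hba, ?_, ?_⟩
  · intro b hb hbmax
    by_cases hc : NoConsecOnes N b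
    · exact huniq b hb hc
    · exfalso
      obtain ⟨c, hcS, hedge, hlt⟩ := raise hN hA hb hc
      have := hbmax c hcS (Relation.ReflTransGen.single hedge)
      rw [this] at hlt
      omega
  · intro k hk1 hkle hklt
    have hane : a.Nonempty := srep_nonempty hn haS
    have hlen : len a = a.max' hane := by
      rw [len, Finset.max'_eq_sup', Finset.sup'_eq_sup]
    have hb := max_bracket hN hA haS hanc hane
    have hm1 : 1 ≤ a.max' hane := haS.1 _ (a.max'_mem hane)
    rw [hlen]
    exact (bracket_unique hN hA hk1 hm1 hkle hklt hb.1 hb.2).symm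
end

section
/- Let A_1, A_2, … be a quasifibonacci sequence of level N and let n be a positive integer with S_n nonempty. Then there is exactly one element a ∈ S_n that contains no N consecutive 0's in its reduced representation (i.e., no index j ≥ 1 with j + N − 1 ≤ l(a) and a_j = a_{j+1} = ⋯ = a_{j+N−1} = 0), and this element is the unique minimal element of the poset P_n. -/
/-- `a` contains no `N` consecutive `0`'s in its reduced representation: there is no `j ≥ 1`
with `j + N - 1 ≤ l(a)` and `a_j = a_{j+1} = ⋯ = a_{j+N-1} = 0`. -/
def NoConsecZeros (N : ℕ) (F : Finset ℕ) : Prop :=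
  ¬ ∃ j, 1 ≤ j ∧ j + N - 1 ≤ len F ∧ ∀ i ∈ Finset.Ico j (j + N), i ∉ F

section Aux

private lemma len_mem {F : Finset ℕ} (h : F.Nonempty) : len F ∈ F := by
  obtain ⟨b, hb, he⟩ := Finset.exists_mem_eq_sup F h id
  rw [len, he]; exact hb

private lemma le_len {F : Finset ℕ} {i : ℕ} (h : i ∈ F) : i ≤ len F :=
  Finset.le_sup (f := id) h

private lemma ncz_no_edge {N : ℕ} {F G : Finset ℕ} (h : NoConsecZeros N F) :
    ¬ Edge N F G := by
  rintro ⟨k, hk1, hkF, hzero, -⟩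
  exact h ⟨k, hk1, by have := le_len hkF; omega, hzero⟩

private lemma sum_two_pow_lt (k N : ℕ) :
    ∑ i ∈ Finset.Ico k (k + N), 2 ^ i < 2 ^ (k + N) := by
  have hr : ∀ m : ℕ, ∑ i ∈ Finset.range m, 2 ^ i < 2 ^ m := by
    intro m
    induction m with
    | zero => simp
    | succ m ih =>
      rw [Finset.sum_range_succ, pow_succ]
      linarith
  calc ∑ i ∈ Finset.Ico k (k + N), 2 ^ i
      ≤ ∑ i ∈ Finset.range (k + N), 2 ^ i := by
        apply Finset.sum_le_sum_of_subset
        intro x hx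
        rw [Finset.mem_Ico] at hx
        rw [Finset.mem_range]
        omega
    _ < 2 ^ (k + N) := hr _

private lemma edge_eq {N : ℕ} {F G : Finset ℕ} {k : ℕ}
    (hkF : (k + N) ∈ F) (hz : ∀ i ∈ Finset.Ico k (k + N), i ∉ F)
    (hkG : (k + N) ∉ G) (ho : ∀ i ∈ Finset.Ico k (k + N), i ∈ G)
    (hout : ∀ t, t ∉ Finset.Icc k (k + N) → (t ∈ F ↔ t ∈ G)) :
    G = F.erase (k + N) ∪ Finset.Ico k (k + N) := by
  ext t
  by_cases ht : t ∈ Finset.Icc k (k + N)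
  · rw [Finset.mem_Icc] at ht
    by_cases htk : t = k + N
    · subst htk
      simp only [Finset.mem_union, Finset.mem_erase, Finset.mem_Ico]
      constructor
      · intro h; exact absurd h hkG
      · rintro (⟨h1, _⟩ | h); · exact absurd rfl h1
        · omega
    · have htI : t ∈ Finset.Ico k (k + N) := Finset.mem_Ico.mpr ⟨ht.1, by omega⟩
      simp only [Finset.mem_union]
      exact ⟨fun _ => Or.inr htI, fun _ => ho t htI⟩
  · have hFG := hout t ht
    have ht' : t ∉ Finset.Ico k (k + N) := by
      rw [Finset.mem_Icc] at ht; rw [Finset.mem_Ico]; omega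
    have htk : t ≠ k + N := by
      rw [Finset.mem_Icc] at ht; omega
    simp only [Finset.mem_union, Finset.mem_erase]
    constructor
    · intro h; exact Or.inl ⟨htk, hFG.mpr h⟩
    · rintro (⟨_, h⟩ | h)
      · exact hFG.mp h
      · exact absurd h ht'

private lemma edge_props {N : ℕ} (hN : 1 ≤ N) {A : ℕ → ℕ} (hA : QuasiFib N A)
    {F G : Finset ℕ} (hF1 : ∀ i ∈ F, 1 ≤ i) (h : Edge N F G) :
    (∀ i ∈ G, 1 ≤ i) ∧ (∑ i ∈ G, A i) = (∑ i ∈ F, A i) ∧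
      (∑ i ∈ G, 2 ^ i) < ∑ i ∈ F, 2 ^ i := by
  obtain ⟨k, hk1, hkF, hz, hkG, ho, hout⟩ := h
  have hGeq := edge_eq hkF hz hkG ho hout
  have hdisj : Disjoint (F.erase (k + N)) (Finset.Ico k (k + N)) := by
    rw [Finset.disjoint_right]
    intro i hi hiF
    exact hz i hi (Finset.mem_of_mem_erase hiF)
  have hIcc : Finset.Icc k (k + N - 1) = Finset.Ico k (k + N) := by
    rw [← Finset.Ico_add_one_right_eq_Icc]
    congr 1
    omega
  have hrec : A (k + N) = ∑ i ∈ Finset.Ico k (k + N), A i := by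
    rw [hA.2.1 k hk1, hIcc]
  refine ⟨?_, ?_, ?_⟩
  · intro i hi
    rw [hGeq] at hi
    rcases Finset.mem_union.mp hi with hi | hi
    · exact hF1 i (Finset.mem_of_mem_erase hi)
    · have := (Finset.mem_Ico.mp hi).1; omega
  · rw [hGeq, Finset.sum_union hdisj, ← hrec]
    exact Finset.sum_erase_add F A hkF
  · rw [hGeq, Finset.sum_union hdisj]
    have h1 : (∑ i ∈ F.erase (k + N), 2 ^ i) + 2 ^ (k + N) = ∑ i ∈ F, 2 ^ i :=
      Finset.sum_erase_add F _ hkF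
    have h2 := sum_two_pow_lt k N
    omega

private lemma exists_edge {N : ℕ} (hN : 2 ≤ N) {F : Finset ℕ}
    (h : ¬ NoConsecZeros N F) : ∃ G, Edge N F G := by
  rw [NoConsecZeros, not_not] at h
  obtain ⟨j, hj1, hj2, hj3⟩ := h
  have hFne : F.Nonempty := by
    rcases Finset.eq_empty_or_nonempty F with he | h'
    · exfalso
      rw [he] at hj2
      simp only [len, Finset.sup_empty, Nat.bot_eq_zero] at hj2
      omega
    · exact h'
  have hlen : len F ∈ F := len_mem hFne
  have hlenge : j + N ≤ len F := by
    rcases Nat.lt_or_ge (len F) (j + N) with h' | h'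
    · exact absurd hlen (hj3 (len F) (Finset.mem_Ico.mpr ⟨by omega, h'⟩))
    · exact h'
  set S := F.filter (fun i => j + N ≤ i) with hS
  have hSne : S.Nonempty := ⟨len F, Finset.mem_filter.mpr ⟨hlen, hlenge⟩⟩
  set m := S.min' hSne with hm
  have hmS : m ∈ S := S.min'_mem hSne
  have hmF : m ∈ F := (Finset.mem_filter.mp hmS).1
  have hmge : j + N ≤ m := (Finset.mem_filter.mp hmS).2
  have hmin : ∀ i ∈ F, j + N ≤ i → m ≤ i := fun i hi hji =>
    S.min'_le i (Finset.mem_filter.mpr ⟨hi, hji⟩)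
  have hkN : (m - N) + N = m := by omega
  refine ⟨F.erase m ∪ Finset.Ico (m - N) m, m - N, by omega, by rw [hkN]; exact hmF,
    ?_, ?_, ?_, ?_⟩
  · intro i hi hiF
    rw [hkN, Finset.mem_Ico] at hi
    rcases Nat.lt_or_ge i (j + N) with h' | h'
    · exact hj3 i (Finset.mem_Ico.mpr ⟨by omega, h'⟩) hiF
    · have := hmin i hiF h'; omega
  · rw [hkN]
    intro hcon
    rcases Finset.mem_union.mp hcon with h | h
    · exact (Finset.mem_erase.mp h).1 rfl
    · exact absurd (Finset.mem_Ico.mp h).2 (lt_irrefl m)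
  · intro i hi
    rw [hkN] at hi
    exact Finset.mem_union_right _ hi
  · intro t ht
    rw [hkN, Finset.mem_Icc] at ht
    have h1 : t ≠ m := by omega
    have h2 : t ∉ Finset.Ico (m - N) m := by rw [Finset.mem_Ico]; omega
    simp only [Finset.mem_union, Finset.mem_erase]
    constructor
    · intro h; exact Or.inl ⟨h1, h⟩
    · rintro (⟨_, h⟩ | h)
      · exact h
      · exact absurd h h2

private lemma descent {N : ℕ} (hN : 2 ≤ N) {A : ℕ → ℕ} (hA : QuasiFib N A) :
    ∀ μ : ℕ, ∀ F : Finset ℕ, (∑ i ∈ F, 2 ^ i) ≤ μ → (∀ i ∈ F, 1 ≤ i) →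
      ∃ G, pge N F G ∧ (∀ i ∈ G, 1 ≤ i) ∧ (∑ i ∈ G, A i) = (∑ i ∈ F, A i) ∧
        NoConsecZeros N G := by
  intro μ
  induction μ using Nat.strong_induction_on with
  | _ μ ih =>
    intro F hμ hF1
    by_cases hncz : NoConsecZeros N F
    · exact ⟨F, Relation.ReflTransGen.refl, hF1, rfl, hncz⟩
    · obtain ⟨G, hedge⟩ := exists_edge hN hncz
      obtain ⟨hG1, hGsum, hGμ⟩ := edge_props (by omega) hA hF1 hedge
      obtain ⟨H, hH1, hH2, hH3, hH4⟩ := ih (∑ i ∈ G, 2 ^ i) (by omega) G le_rfl hG1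
      exact ⟨H, Relation.ReflTransGen.head hedge hH1, hH2, by rw [hH3, hGsum], hH4⟩

private lemma sum_lower {N : ℕ} (hN : 2 ≤ N) {A : ℕ → ℕ} (hA : QuasiFib N A) :
    ∀ m : ℕ, ∀ F : Finset ℕ, len F = m → F.Nonempty → (∀ i ∈ F, 1 ≤ i) →
      NoConsecZeros N F → (∑ i ∈ Finset.Icc 1 (m - 1), A i) < ∑ i ∈ F, A i := by
  intro m
  induction m using Nat.strong_induction_on with
  | _ m ih =>
    intro F hlen hne hF1 hncz
    have hmF : m ∈ F := hlen ▸ len_mem hne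
    have hm1 : 1 ≤ m := hF1 m hmF
    by_cases hmN : m ≤ N
    · have h3 := hA.2.2 m hm1 hmN
      have h4 : A m ≤ ∑ i ∈ F, A i :=
        Finset.single_le_sum (fun i _ => Nat.zero_le _) hmF
      omega
    · push_neg at hmN
      have hwin : ¬ ∀ i ∈ Finset.Ico (m - N) (m - N + N), i ∉ F := by
        intro hcon
        exact hncz ⟨m - N, by omega, by rw [hlen]; omega, hcon⟩
      push_neg at hwin
      obtain ⟨i0, hi0w, hi0F⟩ := hwin
      rw [Finset.mem_Ico, show m - N + N = m by omega] at hi0w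
      have hi0F' : i0 ∈ F.erase m := Finset.mem_erase.mpr ⟨by omega, hi0F⟩
      have hF'ne : (F.erase m).Nonempty := ⟨i0, hi0F'⟩
      set m' := len (F.erase m) with hm'
      have hm'ge : m - N ≤ m' := le_trans hi0w.1 (le_len hi0F')
      have hm'lt : m' < m := by
        have hle : m' ≤ m - 1 := by
          apply Finset.sup_le
          intro x hx
          have hxF := Finset.mem_of_mem_erase hx
          have hxne := (Finset.mem_erase.mp hx).1
          have hxl := le_len hxF
          rw [hlen] at hxl
          simp only [id]
          omega
        omega
      have hm'1 : 1 ≤ m' := le_trans (hF1 i0 hi0F) (le_len hi0F')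
      have hncz' : NoConsecZeros N (F.erase m) := by
        rintro ⟨j, hj1, hj2, hj3⟩
        refine hncz ⟨j, hj1, by rw [hlen]; omega, ?_⟩
        intro i hiw hiF
        rw [Finset.mem_Ico] at hiw
        exact hj3 i (Finset.mem_Ico.mpr hiw) (Finset.mem_erase.mpr ⟨by omega, hiF⟩)
      have hIH := ih m' hm'lt (F.erase m) rfl hF'ne
        (fun i hi => hF1 i (Finset.mem_of_mem_erase hi)) hncz'
      have hsum : (∑ i ∈ F.erase m, A i) + A m = ∑ i ∈ F, A i :=
        Finset.sum_erase_add F A hmF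
      have hAm : (∑ i ∈ Finset.Icc m' (m - 1), A i) ≤ A m := by
        have hrec : A m = ∑ i ∈ Finset.Icc (m - N) (m - 1), A i := by
          have h5 := hA.2.1 (m - N) (by omega)
          rw [show m - N + N = m by omega] at h5
          exact h5
        rw [hrec]
        apply Finset.sum_le_sum_of_subset
        intro x hx
        rw [Finset.mem_Icc] at *
        omega
      have hsplit : (∑ i ∈ Finset.Icc 1 (m - 1), A i) =
          (∑ i ∈ Finset.Icc 1 (m' - 1), A i) + ∑ i ∈ Finset.Icc m' (m - 1), A i := by
        rw [show Finset.Icc 1 (m - 1) = Finset.Ico 1 m by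
              rw [← Finset.Ico_add_one_right_eq_Icc]; congr 1; omega,
            show Finset.Icc 1 (m' - 1) = Finset.Ico 1 m' by
              rw [← Finset.Ico_add_one_right_eq_Icc]; congr 1; omega,
            show Finset.Icc m' (m - 1) = Finset.Ico m' m by
              rw [← Finset.Ico_add_one_right_eq_Icc]; congr 1; omega]
        exact (Finset.sum_Ico_consecutive A hm'1 (le_of_lt hm'lt)).symm
      omega

private lemma sum_le_full {A : ℕ → ℕ} {F : Finset ℕ} (hF1 : ∀ i ∈ F, 1 ≤ i) :
    (∑ i ∈ F, A i) ≤ ∑ i ∈ Finset.Icc 1 (len F), A i := by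
  apply Finset.sum_le_sum_of_subset
  intro i hi
  exact Finset.mem_Icc.mpr ⟨hF1 i hi, le_len hi⟩

private lemma ncz_erase {N : ℕ} (hN : 2 ≤ N) {F : Finset ℕ} (h : NoConsecZeros N F) :
    NoConsecZeros N (F.erase (len F)) := by
  rintro ⟨j, hj1, hj2, hj3⟩
  have hle : len (F.erase (len F)) ≤ len F :=
    Finset.sup_mono (Finset.erase_subset _ _)
  have hne' : (F.erase (len F)).Nonempty := by
    rcases Finset.eq_empty_or_nonempty (F.erase (len F)) with he | h'
    · exfalso
      rw [he] at hj2
      simp only [len, Finset.sup_empty, Nat.bot_eq_zero] at hj2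
      omega
    · exact h'
  have hlt : len (F.erase (len F)) < len F := by
    rcases Nat.lt_or_ge (len (F.erase (len F))) (len F) with h' | h'
    · exact h'
    · exfalso
      have heq : len (F.erase (len F)) = len F := le_antisymm hle h'
      have hmem := len_mem hne'
      rw [heq] at hmem
      exact (Finset.mem_erase.mp hmem).1 rfl
  refine h ⟨j, hj1, by omega, ?_⟩
  intro i hiw hiF
  rw [Finset.mem_Ico] at hiw
  exact hj3 i (Finset.mem_Ico.mpr hiw) (Finset.mem_erase.mpr ⟨by omega, hiF⟩)

private lemma uniq_ncz {N : ℕ} (hN : 2 ≤ N) {A : ℕ → ℕ} (hA : QuasiFib N A) :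
    ∀ n : ℕ, ∀ F G : Finset ℕ, (∀ i ∈ F, 1 ≤ i) → (∀ i ∈ G, 1 ≤ i) →
      (∑ i ∈ F, A i) = n → (∑ i ∈ G, A i) = n →
      NoConsecZeros N F → NoConsecZeros N G → F = G := by
  intro n
  induction n using Nat.strong_induction_on with
  | _ n ih =>
    intro F G hF1 hG1 hFs hGs hFncz hGncz
    have hempty : ∀ H : Finset ℕ, (∀ i ∈ H, 1 ≤ i) → (∑ i ∈ H, A i) = n →
        H.Nonempty → 1 ≤ n := by
      intro H hH1 hHs ⟨g, hg⟩
      have h1 := hA.1 g (hH1 g hg)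
      have h2 : A g ≤ ∑ i ∈ H, A i :=
        Finset.single_le_sum (fun _ _ => Nat.zero_le _) hg
      omega
    rcases Finset.eq_empty_or_nonempty F with hFe | hFne
    · rcases Finset.eq_empty_or_nonempty G with hGe | hGne
      · rw [hFe, hGe]
      · exfalso
        rw [hFe] at hFs
        simp at hFs
        have := hempty G hG1 hGs hGne
        omega
    rcases Finset.eq_empty_or_nonempty G with hGe | hGne
    · exfalso
      rw [hGe] at hGs
      simp at hGs
      have := hempty F hF1 hFs hFne
      omega
    have key : ∀ H K : Finset ℕ, (∀ i ∈ H, 1 ≤ i) → (∀ i ∈ K, 1 ≤ i) →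
        (∑ i ∈ H, A i) = n → (∑ i ∈ K, A i) = n → H.Nonempty → K.Nonempty →
        NoConsecZeros N K → ¬ (len H < len K) := by
      intro H K hH1 hK1 hHs hKs hHne hKne hKncz hlt
      have h1 := sum_lower hN hA (len K) K rfl hKne hK1 hKncz
      have h2 : (∑ i ∈ H, A i) ≤ ∑ i ∈ Finset.Icc 1 (len K - 1), A i := by
        refine le_trans (sum_le_full hH1) (Finset.sum_le_sum_of_subset ?_)
        intro i hi
        rw [Finset.mem_Icc] at *
        omega
      omega
    have hlenFG : len F = len G := by
      rcases Nat.lt_trichotomy (len F) (len G) with h | h | h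
      · exact absurd h (key F G hF1 hG1 hFs hGs hFne hGne hGncz)
      · exact h
      · exact absurd h (key G F hG1 hF1 hGs hFs hGne hFne hFncz)
    have hmF : len F ∈ F := len_mem hFne
    have hmG : len F ∈ G := by rw [hlenFG]; exact len_mem hGne
    have hAm1 := hA.1 (len F) (hF1 _ hmF)
    have hsF : (∑ i ∈ F.erase (len F), A i) + A (len F) = n := by
      rw [Finset.sum_erase_add F A hmF]; exact hFs
    have hsG : (∑ i ∈ G.erase (len F), A i) + A (len F) = n := by
      rw [Finset.sum_erase_add G A hmG]; exact hGs
    have heq := ih (n - A (len F)) (by omega) (F.erase (len F)) (G.erase (len F))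
      (fun i hi => hF1 i (Finset.mem_of_mem_erase hi))
      (fun i hi => hG1 i (Finset.mem_of_mem_erase hi))
      (by omega) (by omega)
      (ncz_erase hN hFncz) (by rw [hlenFG]; exact ncz_erase hN hGncz)
    have hins : insert (len F) (F.erase (len F)) = insert (len F) (G.erase (len F)) := by
      rw [heq]
    rwa [Finset.insert_erase hmF, Finset.insert_erase hmG] at hins

end Aux


/-- Proposition 3.3: if `S_n ≠ ∅` then there is exactly one `a ∈ S_n` with no `N`
consecutive `0`'s in reduced representation, and it is the unique minimal element `0̂`
of `P_n`. -/
theorem stmt_9 (N : ℕ) (hN : 2 ≤ N) (A : ℕ → ℕ) (hA : QuasiFib N A)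
    (n : ℕ) (hn : 1 ≤ n) (hne : (SRep A n).Nonempty) :
    ∃ a ∈ SRep A n, NoConsecZeros N a ∧
      (∀ b ∈ SRep A n, NoConsecZeros N b → b = a) ∧
      (∀ b ∈ SRep A n, pge N a b → b = a) ∧
      (∀ b ∈ SRep A n, (∀ c ∈ SRep A n, pge N b c → c = b) → b = a) := by

  obtain ⟨F0, hF0⟩ := hne
  have hF01 : ∀ i ∈ F0, 1 ≤ i := hF0.1
  have hF0s : (∑ i ∈ F0, A i) = n := hF0.2
  obtain ⟨a, hpge, ha1, has, hancz⟩ := descent hN hA (∑ i ∈ F0, 2 ^ i) F0 le_rfl hF01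
  have haS : a ∈ SRep A n := ⟨ha1, by rw [has]; exact hF0s⟩
  refine ⟨a, haS, hancz, ?_, ?_, ?_⟩
  · intro b hb hbncz
    exact uniq_ncz hN hA n b a hb.1 ha1 hb.2 haS.2 hbncz hancz
  · intro b _ hba
    rcases Relation.ReflTransGen.cases_head hba with h | ⟨c, hc, _⟩
    · exact h.symm
    · exact absurd hc (ncz_no_edge hancz)
  · intro b hb hbmin
    obtain ⟨c, hpgec, hc1, hcs, hcncz⟩ := descent hN hA (∑ i ∈ b, 2 ^ i) b le_rfl hb.1
    have hcS : c ∈ SRep A n := ⟨hc1, by rw [hcs]; exact hb.2⟩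
    have hcb : c = b := hbmin c hcS hpgec
    rw [← hcb]
    exact uniq_ncz hN hA n c a hc1 ha1 hcS.2 haS.2 hcncz hancz
end
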